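/- Let n be a positive integer, γ = ((a,b),(c,d)) ∈ SL(2,ℝ), and τ ∈ ℂ with cτ + d ≠ 0. Set γ·τ = (aτ + b)/(cτ + d). Then the complex matrix A_n(γ) applied to the column vector (n τ², −τ, 1) equals (cτ + d)² times the column vector (n (γ·τ)², −(γ·τ), 1). (This is the equivariance of the map τ ↦ nτ² f − τ e − g intertwining the Möbius action of SL(2,ℝ) on ℂ with the action of A_n(γ).) -/

import Mathlib

open Matrix

/-- For a 2×2 complex matrix `γ = ((a,b),(c,d))`, the 3×3 complex matrix
`A_n(γ) = ((a², −2nab, nb²), (−ac/n, ad+bc, −bd), (c²/n, −2cd, d²))`. -/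
noncomputable def Ac (n : ℕ) (γ : Matrix (Fin 2) (Fin 2) ℂ) : Matrix (Fin 3) (Fin 3) ℂ :=
  !![(γ 0 0)^2, -2*(n:ℂ)*(γ 0 0)*(γ 0 1), (n:ℂ)*(γ 0 1)^2;
     -((γ 0 0)*(γ 1 0))/(n:ℂ), (γ 0 0)*(γ 1 1) + (γ 0 1)*(γ 1 0), -((γ 0 1)*(γ 1 1));
     (γ 1 0)^2/(n:ℂ), -2*(γ 1 0)*(γ 1 1), (γ 1 1)^2]

/-- Let `n > 0`, `γ = ((a,b),(c,d)) ∈ SL(2,ℝ)` and `τ ∈ ℂ` with `cτ + d ≠ 0`.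
Setting `γ·τ = (aτ+b)/(cτ+d)`, the complex matrix `A_n(γ)` maps the column vector
`(nτ², −τ, 1)` to `(cτ+d)²` times the column vector `(n(γ·τ)², −(γ·τ), 1)`. -/
theorem A_equivariant (n : ℕ) (hn : 0 < n) (a b c d : ℝ) (hdet : a*d - b*c = 1)
    (τ : ℂ) (h : (c:ℂ)*τ + (d:ℂ) ≠ 0) :
    (Ac n !![(a:ℂ), (b:ℂ); (c:ℂ), (d:ℂ)]).mulVec ![(n:ℂ)*τ^2, -τ, 1] =
      ((c:ℂ)*τ + (d:ℂ))^2 •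
        ![(n:ℂ)*(((a:ℂ)*τ + (b:ℂ))/((c:ℂ)*τ + (d:ℂ)))^2,
          -(((a:ℂ)*τ + (b:ℂ))/((c:ℂ)*τ + (d:ℂ))), 1] := by
  have hn' : (n:ℂ) ≠ 0 := Nat.cast_ne_zero.mpr hn.ne'
  have hdet' : (a:ℂ)*(d:ℂ) - (b:ℂ)*(c:ℂ) = 1 := by
    exact_mod_cast congrArg (Complex.ofReal ·) hdet
  have h' : τ*(c:ℂ) + (d:ℂ) ≠ 0 := by rwa [mul_comm]
  funext i
  fin_cases i <;>
    simp [Ac, mulVec, dotProduct, Fin.sum_univ_succ] <;>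
    field_simp <;> ring_nf
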